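/- Let L > 0 and let f: R^d → R be convex and L-smooth, with a minimizer x_* and minimum value f_* = f(x_*). Define λ_0 = 0, λ_{t+1} = 1/2 + sqrt(1/4 + λ_t²), x_{-1} = x_0, and for t ≥ 0: y_t = x_t + ((λ_t - 1)/λ_{t+1})(x_t - x_{t-1}), x_{t+1} = y_t - (1/L)∇f(y_t). Then for every T ≥ 1, f(x_T) - f_* ≤ 2L‖x_0 - x_*‖²/(T+1)². -/

import Mathlib

open RealInnerProductSpace

lemma grad_convex_ineq {d : ℕ} (f : EuclideanSpace ℝ (Fin d) → ℝ) (hf : ContDiff ℝ 1 f)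
    (hconv : ConvexOn ℝ Set.univ f) (y z : EuclideanSpace ℝ (Fin d)) :
    f y + ⟪gradient f y, z - y⟫ ≤ f z := by
  have hd : DifferentiableAt ℝ f y := (hf.differentiable one_ne_zero).differentiableAt
  have hgrad : HasGradientAt f (gradient f y) y := hd.hasGradientAt
  have hF : HasFDerivAt f (InnerProductSpace.toDual ℝ _ (gradient f y)) y :=
    hasGradientAt_iff_hasFDerivAt.mp hgrad
  set g : ℝ → EuclideanSpace ℝ (Fin d) := fun t => y + t • (z - y) with hg
  have hgderiv : HasDerivAt g (z - y) 0 := by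
    have h := ((hasDerivAt_id (0:ℝ)).smul_const (z - y)).const_add y
    rw [one_smul] at h; exact h
  have hcomp : HasDerivAt (f ∘ g) ⟪gradient f y, z - y⟫ 0 := by
    have h0 : g 0 = y := by simp [hg]
    have hF' : HasFDerivAt f (InnerProductSpace.toDual ℝ _ (gradient f y)) (g 0) := by
      rw [h0]; exact hF
    have := hF'.comp_hasDerivAt (0:ℝ) hgderiv
    simpa [InnerProductSpace.toDual_apply_apply] using this
  have hcc : ConvexOn ℝ Set.univ (f ∘ g) := by
    have := hconv.comp_affineMap (AffineMap.lineMap y z)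
    have heq : (f ∘ (AffineMap.lineMap y z) : ℝ → ℝ) = f ∘ g := by
      funext t
      simp [hg, AffineMap.lineMap_apply, add_comm]
    simpa [heq] using this
  have := hcc.le_slope_of_hasDerivAt (Set.mem_univ (0:ℝ)) (Set.mem_univ (1:ℝ))
    one_pos hcomp
  have hs : slope (f ∘ g) 0 1 = f z - f y := by
    simp [slope_def_field, hg]
  rw [hs] at this
  linarith

set_option maxHeartbeats 2000000 in
/-- `O(1/T²)` convergence guarantee for Nesterov's accelerated gradient
method on a convex `L`-smooth function `f` with minimizer `x_*` and minimum value
`f_* = f(x_*)`: with `λ₀ = 0`, `λ_{t+1} = 1/2 + √(1/4 + λ_t²)`, `x_{-1} = x₀`,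
`y_t = x_t + ((λ_t - 1)/λ_{t+1})(x_t - x_{t-1})`, `x_{t+1} = y_t - (1/L)∇f(y_t)`,
one has `f(x_T) - f_* ≤ 2L‖x₀ - x_*‖²/(T+1)²` for every `T ≥ 1`.
Here `xp t` denotes `x_{t-1}` (with `xp 0 = x₀`). -/
theorem nag_convergence_rate
    {d : ℕ} (L : ℝ) (hL : 0 < L)
    (f : EuclideanSpace ℝ (Fin d) → ℝ) (hf : ContDiff ℝ 1 f)
    (hconv : ConvexOn ℝ Set.univ f)
    (hsmooth : ∀ x y : EuclideanSpace ℝ (Fin d),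
      f x ≤ f y + ⟪gradient f y, x - y⟫ + L / 2 * ‖x - y‖ ^ 2)
    (xstar : EuclideanSpace ℝ (Fin d)) (hmin : ∀ y, f xstar ≤ f y)
    (fstar : ℝ) (hfstar : fstar = f xstar)
    (lam : ℕ → ℝ) (hlam0 : lam 0 = 0)
    (hlam : ∀ t : ℕ, lam (t + 1) = 1 / 2 + Real.sqrt (1 / 4 + lam t ^ 2))
    (x xp y : ℕ → EuclideanSpace ℝ (Fin d))
    (hxp0 : xp 0 = x 0) (hxp : ∀ t : ℕ, xp (t + 1) = x t)
    (hy : ∀ t : ℕ, y t = x t + ((lam t - 1) / lam (t + 1)) • (x t - xp t))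
    (hx : ∀ t : ℕ, x (t + 1) = y t - (1 / L) • gradient f (y t)) :
    ∀ T : ℕ, 1 ≤ T →
      f (x T) - fstar ≤ 2 * L * ‖x 0 - xstar‖ ^ 2 / ((T : ℝ) + 1) ^ 2 := by
  have hgrad : ∀ a b, f a + ⟪gradient f a, b - a⟫ ≤ f b :=
    fun a b => grad_convex_ineq f hf hconv a b
  -- facts about lam
  have hlam_step : ∀ t, lam t + 1/2 ≤ lam (t+1) := by
    intro t
    rw [hlam t]
    have h1 : Real.sqrt (lam t ^ 2) ≤ Real.sqrt (1/4 + lam t ^ 2) :=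
      Real.sqrt_le_sqrt (by nlinarith)
    rw [Real.sqrt_sq_eq_abs] at h1
    have := le_abs_self (lam t)
    linarith
  have hlam_ge : ∀ T : ℕ, 1 ≤ T → ((T:ℝ)+1)/2 ≤ lam T := by
    intro T hT
    induction T with
    | zero => omega
    | succ n ih =>
      rcases Nat.eq_or_lt_of_le hT with h | h
      · have h1 : lam 1 = 1 := by
          rw [hlam 0, hlam0]
          rw [show (1/4 + (0:ℝ)^2) = (1/2)^2 by norm_num, Real.sqrt_sq (by norm_num)]
          norm_num
        rw [← h, h1]
        norm_num
      · have hn : 1 ≤ n := by omega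
        have := hlam_step n
        have := ih hn
        push_cast
        push_cast at this ⊢
        linarith
  have hlam1 : ∀ t : ℕ, 1 ≤ lam (t+1) := by
    intro t
    have h := hlam_ge (t+1) (by omega)
    push_cast at h
    have ht0 : (0:ℝ) ≤ (t:ℝ) := Nat.cast_nonneg t
    linarith
  have hlam_nonneg : ∀ t, 0 ≤ lam t := by
    intro t
    cases t with
    | zero => rw [hlam0]
    | succ n => linarith [hlam1 n]
  have hlam_sq : ∀ t, lam (t+1)^2 - lam (t+1) = lam t ^ 2 := by
    intro t
    have h1 : lam (t+1) - 1/2 = Real.sqrt (1/4 + lam t ^ 2) := by rw [hlam t]; ring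
    have h2 : (lam (t+1) - 1/2)^2 = 1/4 + lam t ^ 2 := by
      rw [h1, Real.sq_sqrt (by positivity)]
    nlinarith
  -- key descent lemma
  have key : ∀ (t : ℕ) (z : EuclideanSpace ℝ (Fin d)),
      f (x (t+1)) ≤ f z + ⟪gradient f (y t), y t - z⟫
        - 1/(2*L) * ‖gradient f (y t)‖^2 := by
    intro t z
    set g := gradient f (y t) with hgdef
    have e : x (t+1) - y t = -((1/L) • g) := by rw [hx t]; abel
    have h1 : f (x (t+1)) ≤ f (y t) - 1/(2*L) * ‖g‖^2 := by
      have hs := hsmooth (x (t+1)) (y t)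
      rw [e] at hs
      have hi : ⟪g, -((1/L) • g)⟫ = -(1/L) * ‖g‖^2 := by
        rw [inner_neg_right, real_inner_smul_right, real_inner_self_eq_norm_sq]
        ring
      have hn : ‖-((1/L) • g)‖^2 = (1/L)^2 * ‖g‖^2 := by
        rw [norm_neg, norm_smul]
        rw [Real.norm_eq_abs, abs_of_pos (by positivity : (0:ℝ) < 1/L)]
        ring
      rw [hi, hn] at hs
      have hL' : L ≠ 0 := ne_of_gt hL
      have : f (y t) + -(1 / L) * ‖g‖ ^ 2 + L / 2 * ((1 / L) ^ 2 * ‖g‖ ^ 2)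
          = f (y t) - 1/(2*L) * ‖g‖^2 := by field_simp; ring
      linarith
    have h2 := hgrad (y t) z
    have h3 : ⟪g, y t - z⟫ = -⟪g, z - y t⟫ := by
      rw [← inner_neg_right]; congr 1; abel
    rw [h3]
    linarith
  -- the Lyapunov vector
  set u : ℕ → EuclideanSpace ℝ (Fin d) :=
    fun t => lam t • x t - (lam t - 1) • xp t - xstar with hu
  have hu0 : u 0 = x 0 - xstar := by
    simp only [hu, hlam0, hxp0, zero_smul, zero_sub, neg_smul, one_smul]
    module
  have huy : ∀ t, lam (t+1) • y t - (lam (t+1) - 1) • x t - xstar = u t := by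
    intro t
    have hne : lam (t+1) ≠ 0 := by linarith [hlam1 t]
    simp only [hu]
    rw [hy t, smul_add, smul_smul]
    rw [mul_div_cancel₀ _ hne]
    module
  have hurec : ∀ t, u (t+1) = u t - (lam (t+1)/L) • gradient f (y t) := by
    intro t
    have h1 : u (t+1) = lam (t+1) • x (t+1) - (lam (t+1) - 1) • x t - xstar := by
      simp only [hu, hxp t]
    rw [h1, hx t, ← huy t, smul_sub, smul_smul]
    have : lam (t+1) * (1/L) = lam (t+1) / L := by ring
    rw [this]
    module
  -- one-step Lyapunov decrease
  have hstep : ∀ t, lam (t+1)^2 * (f (x (t+1)) - fstar) + L/2 * ‖u (t+1)‖^2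
      ≤ lam t^2 * (f (x t) - fstar) + L/2 * ‖u t‖^2 := by
    intro t
    set g := gradient f (y t) with hgdef
    have hA := key t (x t)
    have hB := key t xstar
    rw [← hfstar] at hB
    rw [show gradient f (y t) = g from rfl] at hA hB
    have hvec : (lam (t+1) - 1) • (y t - x t) + (y t - xstar) = u t := by
      rw [← huy t]; module
    have hP : ⟪g, u t⟫ = (lam (t+1) - 1) * ⟪g, y t - x t⟫ + ⟪g, y t - xstar⟫ := by
      rw [← hvec, inner_add_right, real_inner_smul_right]
    have hnorm : ‖u (t+1)‖^2
        = ‖u t‖^2 - 2*(lam (t+1)/L)*⟪g, u t⟫ + (lam (t+1)/L)^2 * ‖g‖^2 := by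
      rw [hurec t, norm_sub_sq_real, real_inner_smul_right, norm_smul]
      rw [Real.norm_eq_abs, abs_of_nonneg (div_nonneg (hlam_nonneg (t+1)) hL.le)]
      rw [real_inner_comm]
      ring
    have c1 : (0:ℝ) ≤ lam (t+1) - 1 := by linarith [hlam1 t]
    have c2 : (0:ℝ) ≤ lam (t+1) := by linarith [hlam1 t]
    have h3 : lam (t+1) * (f (x (t+1)) - fstar)
        ≤ (lam (t+1) - 1) * (f (x t) - fstar) + ⟪g, u t⟫ - lam (t+1)/(2*L) * ‖g‖^2 := by
      have hA' := mul_le_mul_of_nonneg_left hA c1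
      rw [hP]
      have e1 : lam (t+1) * (f (x (t+1)) - fstar)
          = (lam (t+1) - 1) * f (x (t+1)) + f (x (t+1)) - lam (t+1) * fstar := by ring
      have e2 : (lam (t+1) - 1) * (f (x t) + ⟪g, y t - x t⟫ - 1/(2*L) * ‖g‖^2)
            + (fstar + ⟪g, y t - xstar⟫ - 1/(2*L) * ‖g‖^2) - lam (t+1) * fstar
          = (lam (t+1) - 1) * (f (x t) - fstar)
            + ((lam (t+1) - 1) * ⟪g, y t - x t⟫ + ⟪g, y t - xstar⟫)
            - lam (t+1)/(2*L) * ‖g‖^2 := by ring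
      rw [e1, ← e2]
      linarith [hA', hB]
    have h4 := mul_le_mul_of_nonneg_left h3 c2
    have h5 : lam (t+1) * (lam (t+1) - 1) = lam t ^2 := by
      linear_combination hlam_sq t
    have hL' : L ≠ 0 := ne_of_gt hL
    have h6 : L/2 * ‖u (t+1)‖^2
        = L/2 * ‖u t‖^2 - lam (t+1) * ⟪g, u t⟫ + lam (t+1)^2/(2*L) * ‖g‖^2 := by
      rw [hnorm]; field_simp
    have h4' : lam (t+1)^2 * (f (x (t+1)) - fstar)
        ≤ lam t^2 * (f (x t) - fstar) + lam (t+1) * ⟪g, u t⟫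
          - lam (t+1)^2/(2*L) * ‖g‖^2 := by
      have e : lam (t+1) * ((lam (t+1) - 1) * (f (x t) - fstar) + ⟪g, u t⟫
            - lam (t+1)/(2*L) * ‖g‖^2)
          = lam t^2 * (f (x t) - fstar) + lam (t+1) * ⟪g, u t⟫
            - lam (t+1)^2/(2*L) * ‖g‖^2 := by
        rw [← h5]; ring
      calc lam (t+1)^2 * (f (x (t+1)) - fstar)
          = lam (t+1) * (lam (t+1) * (f (x (t+1)) - fstar)) := by ring
        _ ≤ _ := h4
        _ = _ := e
    linarith [h4', h6]
  -- Lyapunov bounded by initial value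
  have hV : ∀ T : ℕ, lam T^2 * (f (x T) - fstar) + L/2 * ‖u T‖^2
      ≤ L/2 * ‖x 0 - xstar‖^2 := by
    intro T
    induction T with
    | zero =>
      rw [hlam0, hu0]
      norm_num
    | succ n ih =>
      exact le_trans (hstep n) ih
  -- conclusion
  intro T hT
  have h5 : lam T^2 * (f (x T) - fstar) ≤ L/2 * ‖x 0 - xstar‖^2 := by
    have := hV T
    nlinarith [sq_nonneg ‖u T‖, hL]
  have h6 := hlam_ge T hT
  have h7 : (0:ℝ) < (T:ℝ) + 1 := by positivity
  have ha : 0 ≤ f (x T) - fstar := by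
    rw [hfstar]; linarith [hmin (x T)]
  rw [le_div_iff₀ (by positivity : (0:ℝ) < ((T:ℝ)+1)^2)]
  have hsq : (((T:ℝ)+1)/2)^2 ≤ lam T^2 := by nlinarith
  nlinarith [h5, ha, mul_le_mul_of_nonneg_right hsq ha]
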